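/- Let X be a real vector space equipped with two norms N and N' such that there exist constants c₁, c₂ > 0 with c₁·N(x) ≤ N'(x) ≤ c₂·N(x) for all x ∈ X. Let 0 ≤ L < 1, let Φ : X → X be L-Lipschitz with respect to N', and let x* ∈ X be a fixed point of Φ. Then for every x ∈ X, (c₁/(c₂(1+L))) · N(x − Φ(x)) ≤ N(x − x*) ≤ (c₂/(c₁(1−L))) · N(x − Φ(x)). -/

import Mathlib

/-!
Both bounds are the triangle inequality for `N'` through the fixed point: since
`N' (Φ x - x*) ≤ L · N' (x - x*)`, the residual `N' (x - Φ x)` lies between `(1 - L) · N' (x - x*)`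
and `(1 + L) · N' (x - x*)`. Converting `N'` to `N` on each side costs the factor `c₂ / c₁`.
-/

section FixedPoint

variable {F E : Type*} [AddGroup E] [FunLike F E ℝ] [AddGroupSeminormClass F E ℝ]
  (p : F) {f : E → E} {L : ℝ} {x xs : E}

theorem apply_sub_map_le_one_add_mul_of_isFixedPt (hfix : Function.IsFixedPt f xs)
    (hf : p (f x - f xs) ≤ L * p (x - xs)) :
    p (x - f x) ≤ (1 + L) * p (x - xs) := by
  rw [hfix] at hf
  calc p (x - f x) = p ((x - xs) - (f x - xs)) := by rw [sub_sub_sub_cancel_right]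
    _ ≤ p (x - xs) + p (f x - xs) := map_sub_le_add p _ _
    _ ≤ (1 + L) * p (x - xs) := by linarith

theorem one_sub_mul_le_apply_sub_map_of_isFixedPt (hfix : Function.IsFixedPt f xs)
    (hf : p (f x - f xs) ≤ L * p (x - xs)) :
    (1 - L) * p (x - xs) ≤ p (x - f x) := by
  rw [hfix] at hf
  have htri : p (x - xs) ≤ p (x - f x) + p (f x - xs) := by
    simpa only [sub_add_sub_cancel] using map_add_le_add p (x - f x) (f x - xs)
  linarith

end FixedPoint

theorem two_sided_error_bound_via_residual_general
    {X : Type*} [AddCommGroup X] [Module ℝ X]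
    (N N' : Seminorm ℝ X)
    (c₁ c₂ : ℝ) (hc₁ : 0 < c₁) (hc₂ : 0 < c₂)
    (hlow : ∀ x : X, c₁ * N x ≤ N' x) (hup : ∀ x : X, N' x ≤ c₂ * N x)
    (L : ℝ) (hL0 : 0 ≤ L) (hL1 : L < 1)
    (Φ : X → X) (hΦ : ∀ x y : X, N' (Φ x - Φ y) ≤ L * N' (x - y))
    (xs : X) (hfix : Φ xs = xs) (x : X) :
    (c₁ / (c₂ * (1 + L))) * N (x - Φ x) ≤ N (x - xs) ∧
      N (x - xs) ≤ (c₂ / (c₁ * (1 - L))) * N (x - Φ x) := by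
  have h1L : 0 < 1 + L := by linarith
  have h1L' : 0 < 1 - L := by linarith
  constructor
  · rw [div_mul_eq_mul_div, div_le_iff₀ (mul_pos hc₂ h1L)]
    calc c₁ * N (x - Φ x) ≤ N' (x - Φ x) := hlow _
      _ ≤ (1 + L) * N' (x - xs) := apply_sub_map_le_one_add_mul_of_isFixedPt N' hfix (hΦ x xs)
      _ ≤ (1 + L) * (c₂ * N (x - xs)) := by gcongr; exact hup _
      _ = N (x - xs) * (c₂ * (1 + L)) := by ring
  · rw [div_mul_eq_mul_div, le_div_iff₀ (mul_pos hc₁ h1L')]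
    calc N (x - xs) * (c₁ * (1 - L)) = (1 - L) * (c₁ * N (x - xs)) := by ring
      _ ≤ (1 - L) * N' (x - xs) := by gcongr; exact hlow _
      _ ≤ N' (x - Φ x) := one_sub_mul_le_apply_sub_map_of_isFixedPt N' hfix (hΦ x xs)
      _ ≤ c₂ * N (x - Φ x) := hup _

/-- Two-sided error bound: if `N, N'` are norms on a real vector space `X`
with `c₁·N ≤ N' ≤ c₂·N` for constants `c₁, c₂ > 0`, `Φ : X → X` is `L`-Lipschitz with
respect to `N'` with `0 ≤ L < 1`, and `x*` is a fixed point of `Φ`, then for every `x`,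
`(c₁/(c₂(1+L))) ⬝ N(x − Φ(x)) ≤ N(x − x*) ≤ (c₂/(c₁(1−L))) ⬝ N(x − Φ(x))`. -/
theorem two_sided_error_bound_via_residual
    {X : Type*} [AddCommGroup X] [Module ℝ X]
    (N N' : Seminorm ℝ X)
    (hNdef : ∀ x : X, N x = 0 → x = 0) (hN'def : ∀ x : X, N' x = 0 → x = 0)
    (c₁ c₂ : ℝ) (hc₁ : 0 < c₁) (hc₂ : 0 < c₂)
    (hlow : ∀ x : X, c₁ * N x ≤ N' x) (hup : ∀ x : X, N' x ≤ c₂ * N x)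
    (L : ℝ) (hL0 : 0 ≤ L) (hL1 : L < 1)
    (Φ : X → X) (hΦ : ∀ x y : X, N' (Φ x - Φ y) ≤ L * N' (x - y))
    (xs : X) (hfix : Φ xs = xs) (x : X) :
    (c₁ / (c₂ * (1 + L))) * N (x - Φ x) ≤ N (x - xs) ∧
      N (x - xs) ≤ (c₂ / (c₁ * (1 - L))) * N (x - Φ x) :=
  two_sided_error_bound_via_residual_general N N' c₁ c₂ hc₁ hc₂ hlow hup L hL0 hL1 Φ hΦ xs hfix x
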